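/- arXiv:1807.07848 — 10 statements merged into one kernel-verified Lean document; each statement's English description precedes it below -/
import Mathlib

section
/- Theorem 1 (linearization at full cooperation). The SR-EGN vector field F is differentiable at the all-ones profile 𝟙, its Fréchet derivative at 𝟙 is the diagonal linear map whose v-th diagonal entry is λ_v = −σ_C·(k v − β v), and if β v > k v for every player v then λ_v < 0 for every v (so the full-cooperation state is linearly asymptotically stable). -/
/-!
At `x = 𝟙` the logistic factor `x v * (1 - x v)` vanishes and has derivative `-dx v`, so by the
product rule the `v`-th component of `F` has derivative `-(G v 𝟙 - β v * f 1) • dx v`; all the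
other partial derivatives drop out. Since `G v 𝟙 = σC * k v` and `f 1 = σC`, this is
`-σC * (k v - β v) • dx v`, negative as soon as `β v > k v` because `σC < 0`.
-/

open ContinuousLinearMap

theorem HasFDerivAt.mul_one_sub_mul_of_eq_one {𝕜 E : Type*} [NontriviallyNormedField 𝕜]
    [NormedAddCommGroup E] [NormedSpace 𝕜 E] {p g : E → 𝕜} {p' : E →L[𝕜] 𝕜} {a : E}
    (hp : HasFDerivAt p p' a) (hpa : p a = 1) (hg : DifferentiableAt 𝕜 g a) :
    HasFDerivAt (fun x => p x * (1 - p x) * g x) (-g a • p') a := by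
  refine ((hp.mul (hp.const_sub 1)).mul hg.hasFDerivAt).congr_fderiv ?_
  simp only [Pi.mul_apply, hpa, sub_self, mul_zero, one_smul]
  module

theorem srEgn_linearization_allC_general
    (N : ℕ)
    (A : Fin N → Fin N → ℝ)
    (σC σD : ℝ) (hσC : σC < 0)
    (β : Fin N → ℝ)
    (k : Fin N → ℝ) (hk : ∀ v, k v = ∑ w, A v w)
    (G : Fin N → (Fin N → ℝ) → ℝ)
    (hG : ∀ v x, G v x = ∑ w, A v w * ((σC + σD) * x w - σD))
    (f : ℝ → ℝ) (hf : ∀ y, f y = (σC + σD) * y - σD)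
    (F : (Fin N → ℝ) → (Fin N → ℝ))
    (hF : ∀ x v, F x v = x v * (1 - x v) * (G v x - β v * f (x v))) :
    HasFDerivAt F
      (ContinuousLinearMap.pi (fun v =>
        (-σC * (k v - β v)) • (ContinuousLinearMap.proj v : (Fin N → ℝ) →L[ℝ] ℝ)))
      (fun _ => 1)
    ∧ ((∀ v, β v > k v) → ∀ v, -σC * (k v - β v) < 0) := by
  refine ⟨hasFDerivAt_pi'.2 fun v => ?_, fun hβ v => by nlinarith [hβ v]⟩
  have hFv : (fun x => F x v) = fun x => x v * (1 - x v) *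
      ((∑ w, A v w * ((σC + σD) * x w - σD)) - β v * ((σC + σD) * x v - σD)) := by
    funext x
    rw [hF, hG, hf]
  have hvalue : (∑ w, A v w * ((σC + σD) * 1 - σD)) - β v * ((σC + σD) * 1 - σD)
      = σC * (k v - β v) := by
    rw [hk, ← Finset.sum_mul]
    ring
  rw [proj_pi, hFv, neg_mul, ← hvalue]
  exact (hasFDerivAt_apply v _).mul_one_sub_mul_of_eq_one rfl (by fun_prop)

/-- Theorem 1 (linearization at full cooperation). The SR-EGN vector field `F` is
differentiable at the all-ones profile, its Fréchet derivative there is the diagonal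
linear map with `v`-th diagonal entry `λ_v = -σC * (k v - β v)`, and if `β v > k v`
for every player `v`, then `λ_v < 0` for every `v`. -/
theorem srEgn_linearization_allC
    (N : ℕ) (hN : 1 ≤ N)
    (A : Fin N → Fin N → ℝ)
    (hA01 : ∀ v w, A v w = 0 ∨ A v w = 1)
    (hAdiag : ∀ v, A v v = 0)
    (σC σD : ℝ) (hσC : σC < 0) (hσD : 0 < σD)
    (β : Fin N → ℝ)
    (k : Fin N → ℝ) (hk : ∀ v, k v = ∑ w, A v w)
    (G : Fin N → (Fin N → ℝ) → ℝ)
    (hG : ∀ v x, G v x = ∑ w, A v w * ((σC + σD) * x w - σD))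
    (f : ℝ → ℝ) (hf : ∀ y, f y = (σC + σD) * y - σD)
    (F : (Fin N → ℝ) → (Fin N → ℝ))
    (hF : ∀ x v, F x v = x v * (1 - x v) * (G v x - β v * f (x v))) :
    HasFDerivAt F
      (ContinuousLinearMap.pi (fun v =>
        (-σC * (k v - β v)) • (ContinuousLinearMap.proj v : (Fin N → ℝ) →L[ℝ] ℝ)))
      (fun _ => 1)
    ∧ ((∀ v, β v > k v) → ∀ v, -σC * (k v - β v) < 0) :=
  srEgn_linearization_allC_general N A σC σD hσC β k hk G hG f hf F hF
end

section
/- Theorem 2 (linearization at full defection). The SR-EGN vector field F is differentiable at the all-zeros profile 0, its Fréchet derivative at 0 is the diagonal linear map whose v-th diagonal entry is μ_v = −σ_D·(k v − β v), and if there exists a player v with β v > k v then μ_v > 0 for that v (so the full-defection state is linearly unstable). -/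
/-!
Every coordinate of the SR-EGN field has the form `x v * (1 - x v) * g v x` with `g v` affine.
Since the factor `x v * (1 - x v)` vanishes at the origin, the product rule leaves only
`g v 0 • dx v`, so the derivative at full defection is diagonal with entries
`g v 0 = G v 0 - β v * f 0 = -σD * k v + β v * σD`.
-/

open Finset

theorem HasFDerivAt.mul_one_sub_mul_of_eq_zero {𝕜 E : Type*} [NontriviallyNormedField 𝕜]
    [NormedAddCommGroup E] [NormedSpace 𝕜 E] {u g : E → 𝕜} {u' : E →L[𝕜] 𝕜} {x₀ : E}
    (hu : HasFDerivAt u u' x₀) (hu₀ : u x₀ = 0) (hg : DifferentiableAt 𝕜 g x₀) :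
    HasFDerivAt (fun x => u x * (1 - u x) * g x) (g x₀ • u') x₀ :=
  ((hu.fun_mul ((hasFDerivAt_const 1 x₀).fun_sub hu)).fun_mul hg.hasFDerivAt).congr_fderiv
    (by rw [hu₀]; module)

theorem srEgn_linearization_allD_general
    (N : ℕ)
    (A : Fin N → Fin N → ℝ)
    (σC σD : ℝ) (hσD : 0 < σD)
    (β : Fin N → ℝ)
    (k : Fin N → ℝ) (hk : ∀ v, k v = ∑ w, A v w)
    (G : Fin N → (Fin N → ℝ) → ℝ)
    (hG : ∀ v x, G v x = ∑ w, A v w * ((σC + σD) * x w - σD))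
    (f : ℝ → ℝ) (hf : ∀ y, f y = (σC + σD) * y - σD)
    (F : (Fin N → ℝ) → (Fin N → ℝ))
    (hF : ∀ x v, F x v = x v * (1 - x v) * (G v x - β v * f (x v))) :
    HasFDerivAt F
      (ContinuousLinearMap.pi (fun v =>
        (-σD * (k v - β v)) • (ContinuousLinearMap.proj v : (Fin N → ℝ) →L[ℝ] ℝ)))
      (fun _ => 0)
    ∧ (∀ v, β v > k v → -σD * (k v - β v) > 0) := by
  obtain rfl : F = fun x v => x v * (1 - x v) * (G v x - β v * f (x v)) := funext₂ hF
  refine ⟨hasFDerivAt_pi.mpr fun v => ?_, fun v hv => ?_⟩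
  · have hdiff : DifferentiableAt ℝ (fun x => G v x - β v * f (x v)) 0 := by
      simp_rw [hG, hf]
      fun_prop
    have hdiag : G v 0 - β v * f 0 = -σD * (k v - β v) := by
      simp only [hG, hf, hk, Pi.zero_apply, mul_zero, zero_sub, mul_neg, sum_neg_distrib,
        ← sum_mul]
      ring
    exact ((hasFDerivAt_apply v (0 : Fin N → ℝ)).mul_one_sub_mul_of_eq_zero rfl
      hdiff).congr_fderiv (by rw [Pi.zero_apply, hdiag])
  · exact mul_pos_of_neg_of_neg (neg_neg_of_pos hσD) (sub_neg.mpr hv)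

/-- Theorem 2 (linearization at full defection). The SR-EGN vector field `F` is
differentiable at the all-zeros profile, its Fréchet derivative there is the diagonal
linear map with `v`-th diagonal entry `μ_v = -σD * (k v - β v)`, and if there exists a
player `v` with `β v > k v`, then `μ_v > 0` for that `v`. -/
theorem srEgn_linearization_allD
    (N : ℕ) (hN : 1 ≤ N)
    (A : Fin N → Fin N → ℝ)
    (hA01 : ∀ v w, A v w = 0 ∨ A v w = 1)
    (hAdiag : ∀ v, A v v = 0)
    (σC σD : ℝ) (hσC : σC < 0) (hσD : 0 < σD)
    (β : Fin N → ℝ)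
    (k : Fin N → ℝ) (hk : ∀ v, k v = ∑ w, A v w)
    (G : Fin N → (Fin N → ℝ) → ℝ)
    (hG : ∀ v x, G v x = ∑ w, A v w * ((σC + σD) * x w - σD))
    (f : ℝ → ℝ) (hf : ∀ y, f y = (σC + σD) * y - σD)
    (F : (Fin N → ℝ) → (Fin N → ℝ))
    (hF : ∀ x v, F x v = x v * (1 - x v) * (G v x - β v * f (x v))) :
    HasFDerivAt F
      (ContinuousLinearMap.pi (fun v =>
        (-σD * (k v - β v)) • (ContinuousLinearMap.proj v : (Fin N → ℝ) →L[ℝ] ℝ)))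
      (fun _ => 0)
    ∧ (∀ v, β v > k v → -σD * (k v - β v) > 0) :=
  srEgn_linearization_allD_general N A σC σD hσD β k hk G hG f hf F hF
end

section
/- Theorem 3 (core Lyapunov inequality for global cooperation). Assume β v > 0 and β v > ρ · k v for every player v. Then for every strategy profile x with x v ∈ (0,1] for all v and x ≠ 𝟙, one has ∑_v (x v − 1) · (G v x − β v · f (x v)) < 0. -/
/-! Writing `f` as the affine interpolation from `f 0 = -σD` to `f 1 = σC`, every value
`f (x w)` lies in `[ψ, ξ]`. Since `x v - 1 ≤ 0`, the `v`-th summand is therefore at most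
`(x v - 1) * (ψ * k v - ξ * β v)`, and the hypothesis `β v > ρ * k v` with `ξ < 0` makes the
bracket positive. So every summand is nonpositive, and the one at a player with `x v < 1` is
negative. -/

open Finset

lemma mul_sub_add_mem_uIcc {p q y : ℝ} (hy : y ∈ Set.Icc 0 1) :
    y * (q - p) + p ∈ Set.uIcc p q := by
  have h := segment_eq_uIcc p q ▸ lineMap_mem_segment ℝ p q hy
  rwa [AffineMap.lineMap_apply_ring'] at h

lemma mul_sum_sub_le_of_bounds {ι : Type*} [Fintype ι] {a g : ι → ℝ} {e b y ψ ξ : ℝ}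
    (he : e ≤ 0) (ha : ∀ w, 0 ≤ a w) (hb : 0 ≤ b) (hψ : ∀ w, ψ ≤ g w) (hξ : y ≤ ξ) :
    e * (∑ w, a w * g w - b * y) ≤ e * (ψ * ∑ w, a w - ξ * b) := by
  have hsum : ψ * ∑ w, a w ≤ ∑ w, a w * g w := by
    rw [mul_sum]
    exact sum_le_sum fun w _ => by rw [mul_comm]; exact mul_le_mul_of_nonneg_left (hψ w) (ha w)
  have hself : b * y ≤ ξ * b := by
    rw [mul_comm ξ]; exact mul_le_mul_of_nonneg_left hξ hb
  exact mul_le_mul_of_nonpos_left (by linarith) he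

lemma sub_mul_pos_of_div_mul_lt {ψ ξ k b : ℝ} (hξ : ξ < 0) (h : ψ / ξ * k < b) :
    0 < ψ * k - ξ * b := by
  rw [div_mul_eq_mul_div, div_lt_iff_of_neg hξ] at h
  linarith

theorem srEgn_lyapunov_inequality_general
    (N : ℕ)
    (A : Fin N → Fin N → ℝ)
    (hA01 : ∀ v w, A v w = 0 ∨ A v w = 1)
    (σC σD : ℝ) (hσC : σC < 0) (hσD : 0 < σD)
    (β : Fin N → ℝ)
    (k : Fin N → ℝ) (hk : ∀ v, k v = ∑ w, A v w)
    (G : Fin N → (Fin N → ℝ) → ℝ)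
    (hG : ∀ v x, G v x = ∑ w, A v w * ((σC + σD) * x w - σD))
    (f : ℝ → ℝ) (hf : ∀ y, f y = (σC + σD) * y - σD)
    (ψ ξ ρ : ℝ) (hψ : ψ = min σC (-σD)) (hξ : ξ = max σC (-σD)) (hρ : ρ = ψ / ξ)
    (hβpos : ∀ v, 0 < β v) (hβ : ∀ v, β v > ρ * k v)
    (x : Fin N → ℝ) (hx : ∀ v, x v ∈ Set.Ioc (0 : ℝ) 1)
    (hxne : x ≠ fun _ => 1) :
    ∑ v, (x v - 1) * (G v x - β v * f (x v)) < 0 := by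
  have hξneg : ξ < 0 := hξ ▸ max_lt hσC (neg_lt_zero.mpr hσD)
  have hf_mem : ∀ w, f (x w) ∈ Set.Icc ψ ξ := fun w => by
    rw [hψ, hξ, Set.Icc_min_max, Set.uIcc_comm, hf]
    convert mul_sub_add_mem_uIcc (p := -σD) (q := σC) (Set.Ioc_subset_Icc_self (hx w)) using 1
    ring
  have hA : ∀ v w, 0 ≤ A v w := fun v w => by rcases hA01 v w with h | h <;> simp [h]
  have hcoef : ∀ v, 0 < ψ * k v - ξ * β v := fun v =>
    sub_mul_pos_of_div_mul_lt hξneg (hρ ▸ hβ v)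
  have hle : ∀ v, x v - 1 ≤ 0 := fun v => by linarith [(hx v).2]
  obtain ⟨v₀, hv₀⟩ := Function.ne_iff.mp hxne
  calc ∑ v, (x v - 1) * (G v x - β v * f (x v))
      ≤ ∑ v, (x v - 1) * (ψ * k v - ξ * β v) := sum_le_sum fun v _ => by
        simp only [hG, hk, ← hf]
        exact mul_sum_sub_le_of_bounds (hle v) (hA v) (hβpos v).le (fun w => (hf_mem w).1)
          (hf_mem v).2
    _ < 0 := sum_neg' (fun v _ => mul_nonpos_of_nonpos_of_nonneg (hle v) (hcoef v).le)
        ⟨v₀, mem_univ _, mul_neg_of_neg_of_pos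
          (sub_neg.mpr (lt_of_le_of_ne (hx v₀).2 hv₀)) (hcoef v₀)⟩

/-- Theorem 3 (core Lyapunov inequality for global cooperation). If `β v > 0` and
`β v > ρ * k v` for every player, then for every strategy profile `x` with
`x v ∈ (0,1]` for all `v` and `x ≠ 𝟙`, one has
`∑ v, (x v - 1) * (G v x - β v * f (x v)) < 0`. -/
theorem srEgn_lyapunov_inequality
    (N : ℕ) (hN : 1 ≤ N)
    (A : Fin N → Fin N → ℝ)
    (hA01 : ∀ v w, A v w = 0 ∨ A v w = 1)
    (hAdiag : ∀ v, A v v = 0)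
    (σC σD : ℝ) (hσC : σC < 0) (hσD : 0 < σD)
    (β : Fin N → ℝ)
    (k : Fin N → ℝ) (hk : ∀ v, k v = ∑ w, A v w)
    (G : Fin N → (Fin N → ℝ) → ℝ)
    (hG : ∀ v x, G v x = ∑ w, A v w * ((σC + σD) * x w - σD))
    (f : ℝ → ℝ) (hf : ∀ y, f y = (σC + σD) * y - σD)
    (ψ ξ ρ : ℝ) (hψ : ψ = min σC (-σD)) (hξ : ξ = max σC (-σD)) (hρ : ρ = ψ / ξ)
    (hβpos : ∀ v, 0 < β v) (hβ : ∀ v, β v > ρ * k v)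
    (x : Fin N → ℝ) (hx : ∀ v, x v ∈ Set.Ioc (0 : ℝ) 1)
    (hxne : x ≠ fun _ => 1) :
    ∑ v, (x v - 1) * (G v x - β v * f (x v)) < 0 :=
  srEgn_lyapunov_inequality_general N A hA01 σC σD hσC hσD β k hk G hG f hf ψ ξ ρ hψ hξ hρ hβpos hβ
    x hx hxne
end

section
/- Strict decrease of the Lyapunov function: assume β v > 0 and β v > ρ · k v for every player v. Let x : ℝ → (Fin N → ℝ) be a trajectory such that at time t every component satisfies x t v ∈ (0,1], x t ≠ 𝟙, and each component function s ↦ x s v has derivative F (x t) v at t. Then s ↦ V (x s) is differentiable at t with strictly negative derivative. -/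
/-!
Since `ẋᵥ / xᵥ = (1 - xᵥ) (Gᵥ(x) - βᵥ f(xᵥ))`, we get
`dV/dt = -∑ᵥ (1 - xᵥ) (Gᵥ(x) - βᵥ f(xᵥ))`. On `[0, 1]` the self-regulation term `f` is a
convex combination of `σ_C` and `-σ_D`, so it lies in `[ψ, ξ] ⊆ (-∞, 0)`. Hence
`Gᵥ(x) ≥ ψ kᵥ`, while `βᵥ f(xᵥ) ≤ βᵥ ξ < ψ kᵥ` exactly because `βᵥ > ρ kᵥ` and `ξ < 0`. Every
bracket is therefore positive, every summand nonnegative, and a coordinate with `xᵥ < 1`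
makes the sum strictly positive.
-/

open Finset

lemma mul_add_one_sub_mul_mem_Icc {a b y : ℝ} (hy : y ∈ Set.Icc (0 : ℝ) 1) :
    y * a + (1 - y) * b ∈ Set.Icc (min a b) (max a b) := by
  obtain ⟨hy0, hy1⟩ := hy
  have hy1' : 0 ≤ 1 - y := by linarith
  constructor
  · nlinarith [min_le_left a b, min_le_right a b]
  · nlinarith [le_max_left a b, le_max_right a b]

lemma mul_sum_le_sum_mul {ι : Type*} (s : Finset ι) {w g : ι → ℝ} {c : ℝ}
    (hw : ∀ i ∈ s, 0 ≤ w i) (hg : ∀ i ∈ s, c ≤ g i) :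
    c * ∑ i ∈ s, w i ≤ ∑ i ∈ s, w i * g i := by
  rw [mul_sum]
  exact sum_le_sum fun i hi => by nlinarith [hw i hi, hg i hi]

lemma mul_lt_mul_of_div_mul_lt_of_neg {β ψ ξ k : ℝ} (hξ : ξ < 0) (h : ψ / ξ * k < β) :
    β * ξ < ψ * k := by
  have hmul := mul_lt_mul_of_neg_right h hξ
  rwa [div_mul_eq_mul_div, div_mul_cancel₀ _ hξ.ne] at hmul

lemma hasDerivAt_neg_sum_log {ι : Type*} [Fintype ι] {x : ℝ → ι → ℝ} {x' : ι → ℝ} {t : ℝ}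
    (hx : ∀ i, HasDerivAt (fun s => x s i) (x' i) t) (hx0 : ∀ i, x t i ≠ 0) :
    HasDerivAt (fun s => -∑ i, Real.log (x s i)) (-∑ i, x' i / x t i) t :=
  (HasDerivAt.fun_sum fun i _ => (hx i).log (hx0 i)).fun_neg

lemma sum_one_sub_mul_pos {ι : Type*} [Fintype ι] {y c : ι → ℝ}
    (hy : ∀ i, y i ≤ 1) (hc : ∀ i, 0 < c i) (hne : y ≠ fun _ => 1) :
    0 < ∑ i, (1 - y i) * c i := by
  obtain ⟨i, hi⟩ := Function.ne_iff.mp hne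
  refine sum_pos' (fun j _ => mul_nonneg (by linarith [hy j]) (hc j).le) ⟨i, mem_univ i, ?_⟩
  exact mul_pos (by linarith [lt_of_le_of_ne (hy i) hi]) (hc i)

theorem lyapunov_strict_decrease_general
    (N : ℕ)
    (A : Fin N → Fin N → ℝ)
    (hA01 : ∀ v w, A v w = 0 ∨ A v w = 1)
    (σC σD : ℝ) (hσC : σC < 0) (hσD : 0 < σD)
    (β : Fin N → ℝ)
    (k : Fin N → ℝ) (hk : ∀ v, k v = ∑ w, A v w)
    (G : Fin N → (Fin N → ℝ) → ℝ)
    (hG : ∀ v x, G v x = ∑ w, A v w * ((σC + σD) * x w - σD))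
    (f : ℝ → ℝ) (hf : ∀ y, f y = (σC + σD) * y - σD)
    (F : (Fin N → ℝ) → (Fin N → ℝ))
    (hF : ∀ x v, F x v = x v * (1 - x v) * (G v x - β v * f (x v)))
    (ψ ξ ρ : ℝ) (hψ : ψ = min σC (-σD)) (hξ : ξ = max σC (-σD)) (hρ : ρ = ψ / ξ)
    (V : (Fin N → ℝ) → ℝ)
    (hV : ∀ x, V x = -∑ v, Real.log (x v))
    (hβpos : ∀ v, 0 < β v) (hβ : ∀ v, β v > ρ * k v)
    (x : ℝ → (Fin N → ℝ)) (t : ℝ)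
    (hmem : ∀ v, x t v ∈ Set.Ioc (0 : ℝ) 1)
    (hne : x t ≠ fun _ => 1)
    (hode : ∀ v, HasDerivAt (fun s => x s v) (F (x t) v) t) :
    ∃ d : ℝ, HasDerivAt (fun s => V (x s)) d t ∧ d < 0 := by
  have hξneg : ξ < 0 := hξ ▸ max_lt hσC (neg_neg_of_pos hσD)
  have hf_mem : ∀ v, f (x t v) ∈ Set.Icc ψ ξ := fun v => by
    rw [hf, hψ, hξ, show (σC + σD) * x t v - σD = x t v * σC + (1 - x t v) * -σD by ring]
    exact mul_add_one_sub_mul_mem_Icc (Set.Ioc_subset_Icc_self (hmem v))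
  have hbracket : ∀ v, 0 < G v (x t) - β v * f (x t v) := fun v => by
    have hA0 : ∀ w ∈ univ, 0 ≤ A v w := fun w _ => by rcases hA01 v w with h | h <;> simp [h]
    have hG_ge : ψ * k v ≤ G v (x t) := by
      simp only [hG, hk, ← hf]
      exact mul_sum_le_sum_mul univ hA0 fun w _ => (hf_mem w).1
    have hβf : β v * f (x t v) ≤ β v * ξ := mul_le_mul_of_nonneg_left (hf_mem v).2 (hβpos v).le
    linarith [mul_lt_mul_of_div_mul_lt_of_neg hξneg (hρ ▸ hβ v)]
  have hx0 : ∀ v, x t v ≠ 0 := fun v => (hmem v).1.ne'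
  have hsummand : ∀ v, F (x t) v / x t v = (1 - x t v) * (G v (x t) - β v * f (x t v)) :=
    fun v => by rw [hF]; field_simp [hx0 v]
  have hderiv : HasDerivAt (fun s => V (x s)) (-∑ v, F (x t) v / x t v) t := by
    simpa only [hV] using hasDerivAt_neg_sum_log hode hx0
  refine ⟨_, hderiv, ?_⟩
  rw [neg_neg_iff_pos, sum_congr rfl fun v _ => hsummand v]
  exact sum_one_sub_mul_pos (fun v => (hmem v).2) hbracket hne

/-- Strict decrease of the Lyapunov function: if `β v > 0` and `β v > ρ * k v` for
every player, and at time `t` a trajectory satisfies `x t v ∈ (0,1]` for all `v`,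
`x t ≠ 𝟙`, and solves the SR-EGN equation componentwise, then `s ↦ V (x s)` is
differentiable at `t` with strictly negative derivative. -/
theorem lyapunov_strict_decrease
    (N : ℕ) (hN : 1 ≤ N)
    (A : Fin N → Fin N → ℝ)
    (hA01 : ∀ v w, A v w = 0 ∨ A v w = 1)
    (hAdiag : ∀ v, A v v = 0)
    (σC σD : ℝ) (hσC : σC < 0) (hσD : 0 < σD)
    (β : Fin N → ℝ)
    (k : Fin N → ℝ) (hk : ∀ v, k v = ∑ w, A v w)
    (G : Fin N → (Fin N → ℝ) → ℝ)
    (hG : ∀ v x, G v x = ∑ w, A v w * ((σC + σD) * x w - σD))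
    (f : ℝ → ℝ) (hf : ∀ y, f y = (σC + σD) * y - σD)
    (F : (Fin N → ℝ) → (Fin N → ℝ))
    (hF : ∀ x v, F x v = x v * (1 - x v) * (G v x - β v * f (x v)))
    (ψ ξ ρ : ℝ) (hψ : ψ = min σC (-σD)) (hξ : ξ = max σC (-σD)) (hρ : ρ = ψ / ξ)
    (V : (Fin N → ℝ) → ℝ)
    (hV : ∀ x, V x = -∑ v, Real.log (x v))
    (hβpos : ∀ v, 0 < β v) (hβ : ∀ v, β v > ρ * k v)
    (x : ℝ → (Fin N → ℝ)) (t : ℝ)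
    (hmem : ∀ v, x t v ∈ Set.Ioc (0 : ℝ) 1)
    (hne : x t ≠ fun _ => 1)
    (hode : ∀ v, HasDerivAt (fun s => x s v) (F (x t) v) t) :
    ∃ d : ℝ, HasDerivAt (fun s => V (x s)) d t ∧ d < 0 :=
  lyapunov_strict_decrease_general N A hA01 σC σD hσC hσD β k hk G hG f hf F hF ψ ξ ρ hψ hξ hρ V hV
    hβpos hβ x t hmem hne hode
end

section
/- Positivity of the self-regulated gradient (condition (cond4)): if a player v satisfies β v > 0 and β v > ρ · k v, then for every strategy profile x with x w ∈ (0,1] for all w, one has G v x − β v · f (x v) > 0. -/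
/-! On `[0, 1]` the self-regulation function `f y = y • σ_C + (1 - y) • (-σ_D)` is a convex
combination of `σ_C` and `-σ_D`, so it takes values in `[ψ, ξ]`. Since `G v x = ∑_w A v w * f (x w)`
with nonnegative weights summing to `k v`, this gives `G v x ≥ ψ k v`. On the other side
`β v f (x v) ≤ β v ξ`, and because `ξ < 0` the hypothesis `β v > (ψ / ξ) k v` is exactly
`β v ξ < ψ k v`. -/

open Finset Set

lemma add_mul_sub_mem_Icc_min_max {a b y : ℝ} (hy : y ∈ Icc (0 : ℝ) 1) :
    (a + b) * y - b ∈ Icc (min a (-b)) (max a (-b)) := by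
  have hcombo : (a + b) * y - b = y • a + (1 - y) • (-b) := by
    simp only [smul_eq_mul]
    ring
  have hy' : 0 ≤ 1 - y := sub_nonneg.mpr hy.2
  rw [hcombo]
  exact ⟨Convex.min_le_combo a (-b) hy.1 hy' (by ring),
    Convex.combo_le_max a (-b) hy.1 hy' (by ring)⟩

lemma mul_sum_le_sum_mul_of_le {ι R : Type*} [CommSemiring R] [PartialOrder R] [IsOrderedRing R]
    {s : Finset ι} {w g : ι → R} {m : R} (hw : ∀ i ∈ s, 0 ≤ w i) (hg : ∀ i ∈ s, m ≤ g i) :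
    m * ∑ i ∈ s, w i ≤ ∑ i ∈ s, w i * g i := by
  rw [mul_sum]
  refine sum_le_sum fun i hi => ?_
  rw [mul_comm]
  exact mul_le_mul_of_nonneg_left (hg i hi) (hw i hi)

lemma mul_lt_of_div_mul_lt_of_neg {K : Type*} [Field K] [LinearOrder K] [IsStrictOrderedRing K]
    {a b c d : K} (hb : b < 0) (h : a / b * c < d) : d * b < a * c := by
  rwa [div_mul_eq_mul_div, div_lt_iff_of_neg hb] at h

theorem self_regulated_gradient_positive_general
    (N : ℕ)
    (A : Fin N → Fin N → ℝ)
    (hA01 : ∀ v w, A v w = 0 ∨ A v w = 1)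
    (σC σD : ℝ) (hσC : σC < 0) (hσD : 0 < σD)
    (β : Fin N → ℝ)
    (k : Fin N → ℝ) (hk : ∀ v, k v = ∑ w, A v w)
    (G : Fin N → (Fin N → ℝ) → ℝ)
    (hG : ∀ v x, G v x = ∑ w, A v w * ((σC + σD) * x w - σD))
    (f : ℝ → ℝ) (hf : ∀ y, f y = (σC + σD) * y - σD)
    (ψ ξ ρ : ℝ) (hψ : ψ = min σC (-σD)) (hξ : ξ = max σC (-σD)) (hρ : ρ = ψ / ξ)
    (v : Fin N) (hβpos : 0 < β v) (hβ : β v > ρ * k v)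
    (x : Fin N → ℝ) (hx : ∀ w, x w ∈ Set.Ioc (0 : ℝ) 1) :
    G v x - β v * f (x v) > 0 := by
  have hξ_neg : ξ < 0 := hξ ▸ max_lt hσC (neg_neg_of_pos hσD)
  have hf_mem : ∀ w, f (x w) ∈ Icc ψ ξ := fun w => by
    rw [hf, hψ, hξ]
    exact add_mul_sub_mem_Icc_min_max (Ioc_subset_Icc_self (hx w))
  have hA_nonneg : ∀ w, 0 ≤ A v w := fun w =>
    (hA01 v w).elim (fun h => h.ge) (fun h => h ▸ zero_le_one)
  have hG_ge : ψ * k v ≤ G v x := by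
    simp only [hG, hk, ← hf]
    exact mul_sum_le_sum_mul_of_le (fun w _ => hA_nonneg w) (fun w _ => (hf_mem w).1)
  have hβf_lt : β v * f (x v) < G v x :=
    calc β v * f (x v) ≤ β v * ξ := mul_le_mul_of_nonneg_left (hf_mem v).2 hβpos.le
      _ < ψ * k v := mul_lt_of_div_mul_lt_of_neg hξ_neg (hρ ▸ hβ)
      _ ≤ G v x := hG_ge
  exact sub_pos.mpr hβf_lt

/-- Positivity of the self-regulated gradient (condition (cond4)): if player `v`
satisfies `β v > 0` and `β v > ρ * k v`, then for every profile `x` with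
`x w ∈ (0,1]` for all `w`, `G v x - β v * f (x v) > 0`. -/
theorem self_regulated_gradient_positive
    (N : ℕ) (hN : 1 ≤ N)
    (A : Fin N → Fin N → ℝ)
    (hA01 : ∀ v w, A v w = 0 ∨ A v w = 1)
    (hAdiag : ∀ v, A v v = 0)
    (σC σD : ℝ) (hσC : σC < 0) (hσD : 0 < σD)
    (β : Fin N → ℝ)
    (k : Fin N → ℝ) (hk : ∀ v, k v = ∑ w, A v w)
    (G : Fin N → (Fin N → ℝ) → ℝ)
    (hG : ∀ v x, G v x = ∑ w, A v w * ((σC + σD) * x w - σD))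
    (f : ℝ → ℝ) (hf : ∀ y, f y = (σC + σD) * y - σD)
    (ψ ξ ρ : ℝ) (hψ : ψ = min σC (-σD)) (hξ : ξ = max σC (-σD)) (hρ : ρ = ψ / ξ)
    (v : Fin N) (hβpos : 0 < β v) (hβ : β v > ρ * k v)
    (x : Fin N → ℝ) (hx : ∀ w, x w ∈ Set.Ioc (0 : ℝ) 1) :
    G v x - β v * f (x v) > 0 :=
  self_regulated_gradient_positive_general N A hA01 σC σD hσC hσD β k hk G hG f hf ψ ξ ρ hψ hξ hρ v
    hβpos hβ x hx
end

section
/- Defection dominates without self-regulation: if β v = 0 for every player v, then for every strategy profile x with x w ∈ [0,1] for all w and every player v, one has F x v ≤ 0 (every player's level of cooperation is non-increasing under the EGN dynamics). -/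
/-- Defection dominates without self-regulation: if `β v = 0` for every player,
then for every profile `x` with `x w ∈ [0,1]` for all `w` and every player `v`,
`F x v ≤ 0`. -/
theorem egn_defection_dominates
    (N : ℕ) (hN : 1 ≤ N)
    (A : Fin N → Fin N → ℝ)
    (hA01 : ∀ v w, A v w = 0 ∨ A v w = 1)
    (hAdiag : ∀ v, A v v = 0)
    (σC σD : ℝ) (hσC : σC < 0) (hσD : 0 < σD)
    (β : Fin N → ℝ)
    (k : Fin N → ℝ) (hk : ∀ v, k v = ∑ w, A v w)
    (G : Fin N → (Fin N → ℝ) → ℝ)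
    (hG : ∀ v x, G v x = ∑ w, A v w * ((σC + σD) * x w - σD))
    (f : ℝ → ℝ) (hf : ∀ y, f y = (σC + σD) * y - σD)
    (F : (Fin N → ℝ) → (Fin N → ℝ))
    (hF : ∀ x v, F x v = x v * (1 - x v) * (G v x - β v * f (x v)))
    (hβ : ∀ v, β v = 0)
    (x : Fin N → ℝ) (hx : ∀ w, x w ∈ Set.Icc (0 : ℝ) 1) (v : Fin N) :
    F x v ≤ 0 := by
  rw [hF, hβ, zero_mul, sub_zero]
  have hG0 : G v x ≤ 0 := by
    rw [hG]
    apply Finset.sum_nonpos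
    intro w _
    have hxw := hx w
    have hterm : (σC + σD) * x w - σD ≤ 0 := by nlinarith [hxw.1, hxw.2]
    rcases hA01 v w with h | h <;> rw [h] <;> nlinarith
  have hxv := hx v
  have : 0 ≤ x v * (1 - x v) := by nlinarith [hxv.1, hxv.2]
  exact mul_nonpos_of_nonneg_of_nonpos this hG0
end

section
/- Monotone decline of cooperation in the EGN equation: assume β v = 0 for every player v, and let x : ℝ → (Fin N → ℝ) be a global solution of the EGN equation, i.e. for every time t and every player v, x t v ∈ [0,1] and the function s ↦ x s v has derivative F (x t) v at t. Then for every player v the function t ↦ x t v is antitone (non-increasing). -/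
/-- Monotone decline of cooperation in the EGN equation: if `β v = 0` for every
player and `x : ℝ → (Fin N → ℝ)` is a global solution of the EGN equation with
values in `[0,1]`, then every component `t ↦ x t v` is antitone. -/
theorem egn_cooperation_antitone
    (N : ℕ) (hN : 1 ≤ N)
    (A : Fin N → Fin N → ℝ)
    (hA01 : ∀ v w, A v w = 0 ∨ A v w = 1)
    (hAdiag : ∀ v, A v v = 0)
    (σC σD : ℝ) (hσC : σC < 0) (hσD : 0 < σD)
    (β : Fin N → ℝ)
    (k : Fin N → ℝ) (hk : ∀ v, k v = ∑ w, A v w)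
    (G : Fin N → (Fin N → ℝ) → ℝ)
    (hG : ∀ v x, G v x = ∑ w, A v w * ((σC + σD) * x w - σD))
    (f : ℝ → ℝ) (hf : ∀ y, f y = (σC + σD) * y - σD)
    (F : (Fin N → ℝ) → (Fin N → ℝ))
    (hF : ∀ x v, F x v = x v * (1 - x v) * (G v x - β v * f (x v)))
    (hβ : ∀ v, β v = 0)
    (x : ℝ → (Fin N → ℝ))
    (hmem : ∀ t v, x t v ∈ Set.Icc (0 : ℝ) 1)
    (hode : ∀ t v, HasDerivAt (fun s => x s v) (F (x t) v) t) :
    ∀ v, Antitone (fun t => x t v) := by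
  intro v
  have hFle : ∀ t, F (x t) v ≤ 0 := by
    intro t
    have hx := hmem t v
    have hG0 : G v (x t) ≤ 0 := by
      rw [hG]
      apply Finset.sum_nonpos
      intro w _
      have hxw := hmem t w
      have h1 : (σC + σD) * x t w - σD ≤ 0 := by
        have h2 : (σC + σD) * x t w - σD = σC * x t w + σD * (x t w - 1) := by ring
        rw [h2]
        have : σC * x t w ≤ 0 := mul_nonpos_of_nonpos_of_nonneg hσC.le hxw.1
        nlinarith [hxw.2]
      rcases hA01 v w with h | h <;> simp [h] <;> linarith
    rw [hF, hβ, hf]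
    have hnn : 0 ≤ x t v * (1 - x t v) := mul_nonneg hx.1 (by linarith [hx.2])
    have : G v (x t) - 0 * ((σC + σD) * x t v - σD) = G v (x t) := by ring
    rw [this]
    exact mul_nonpos_of_nonneg_of_nonpos hnn hG0
  have hdiff : Differentiable ℝ (fun t => x t v) := fun t => (hode t v).differentiableAt
  apply antitone_of_deriv_nonpos hdiff
  intro t
  rw [(hode t v).deriv]
  exact hFle t
end

section
/- Convergence of strategies in the EGN equation: assume β v = 0 for every player v, and let x : ℝ → (Fin N → ℝ) be a global solution of the EGN equation, i.e. for every time t and every player v, x t v ∈ [0,1] and the function s ↦ x s v has derivative F (x t) v at t. Then for every player v there exists a limit L_v ∈ [0,1] such that x t v tends to L_v as t → ∞. -/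
/-- Convergence of strategies in the EGN equation: if `β v = 0` for every player
and `x : ℝ → (Fin N → ℝ)` is a global solution of the EGN equation with values in
`[0,1]`, then every component `t ↦ x t v` converges to some limit `L_v ∈ [0,1]` as
`t → ∞`. -/
theorem egn_strategies_converge
    (N : ℕ) (hN : 1 ≤ N)
    (A : Fin N → Fin N → ℝ)
    (hA01 : ∀ v w, A v w = 0 ∨ A v w = 1)
    (hAdiag : ∀ v, A v v = 0)
    (σC σD : ℝ) (hσC : σC < 0) (hσD : 0 < σD)
    (β : Fin N → ℝ)
    (k : Fin N → ℝ) (hk : ∀ v, k v = ∑ w, A v w)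
    (G : Fin N → (Fin N → ℝ) → ℝ)
    (hG : ∀ v x, G v x = ∑ w, A v w * ((σC + σD) * x w - σD))
    (f : ℝ → ℝ) (hf : ∀ y, f y = (σC + σD) * y - σD)
    (F : (Fin N → ℝ) → (Fin N → ℝ))
    (hF : ∀ x v, F x v = x v * (1 - x v) * (G v x - β v * f (x v)))
    (hβ : ∀ v, β v = 0)
    (x : ℝ → (Fin N → ℝ))
    (hmem : ∀ t v, x t v ∈ Set.Icc (0 : ℝ) 1)
    (hode : ∀ t v, HasDerivAt (fun s => x s v) (F (x t) v) t) :
    ∀ v, ∃ L ∈ Set.Icc (0 : ℝ) 1,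
      Filter.Tendsto (fun t => x t v) Filter.atTop (nhds L) := by
  intro v
  -- the derivative is nonpositive
  have hFle : ∀ t, F (x t) v ≤ 0 := by
    intro t
    rw [hF, hβ, hG]
    have hx := hmem t v
    have hG0 : (∑ w, A v w * ((σC + σD) * x t w - σD)) ≤ 0 := by
      apply Finset.sum_nonpos
      intro w _
      rcases hA01 v w with h | h
      · simp [h]
      · have hxw := hmem t w
        have h1 : 0 ≤ x t w := hxw.1
        have h2 : x t w ≤ 1 := hxw.2
        rw [h, one_mul]
        nlinarith
    have hx0 : 0 ≤ x t v * (1 - x t v) := by nlinarith [hx.1, hx.2]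
    nlinarith
  -- the component is antitone
  have hanti : Antitone (fun t => x t v) := by
    apply antitone_of_deriv_nonpos
    · exact fun t => (hode t v).differentiableAt
    · intro t
      rw [(hode t v).deriv]
      exact hFle t
  have hbdd : BddBelow (Set.range fun t => x t v) := by
    refine ⟨0, ?_⟩
    rintro y ⟨t, rfl⟩
    exact (hmem t v).1
  refine ⟨⨅ t, x t v, ⟨?_, ?_⟩, tendsto_atTop_ciInf hanti hbdd⟩
  · exact le_ciInf fun t => (hmem t v).1
  · exact le_trans (ciInf_le hbdd 0) (hmem 0 v).2
end

section
/- Location of interior steady states (Figure 3 caption claim): let σ_C < 0 < σ_D with |σ_C| ≠ σ_D, let k > 0 and β > 0 be reals, let x̄ ∈ [0,1] and x* ∈ (0,1). If k·((σ_C + σ_D)·x̄ − σ_D) = β·((σ_C + σ_D)·x* − σ_D) (i.e. x* is an interior steady state of a player of in-degree k, self-regulation weight β and average neighbor strategy x̄), then 1/ρ < β/k < ρ. -/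
/-- Location of interior steady states (Figure 3 caption claim): with
`σC < 0 < σD` and `|σC| ≠ σD`, if `k > 0`, `β > 0`, `x̄ ∈ [0,1]`, `x* ∈ (0,1)` and
`k * ((σC + σD) * x̄ - σD) = β * ((σC + σD) * x* - σD)`, then `1/ρ < β/k < ρ`. -/
theorem interior_steady_state_location
    (σC σD : ℝ) (hσC : σC < 0) (hσD : 0 < σD) (hne : |σC| ≠ σD)
    (ψ ξ ρ : ℝ) (hψ : ψ = min σC (-σD)) (hξ : ξ = max σC (-σD)) (hρ : ρ = ψ / ξ)
    (k β : ℝ) (hk : 0 < k) (hβ : 0 < β)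
    (xbar : ℝ) (hxbar : xbar ∈ Set.Icc (0 : ℝ) 1)
    (xstar : ℝ) (hxstar : xstar ∈ Set.Ioo (0 : ℝ) 1)
    (hsteady : k * ((σC + σD) * xbar - σD) = β * ((σC + σD) * xstar - σD)) :
    1 / ρ < β / k ∧ β / k < ρ := by
  obtain ⟨hx0, hx1⟩ := hxstar
  obtain ⟨hb0, hb1⟩ := hxbar
  have habs : |σC| = -σC := abs_of_neg hσC
  have hne' : σC ≠ -σD := by
    intro h
    apply hne
    rw [habs, h]; ring
  rcases lt_or_gt_of_ne hne' with hc | hc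
  · -- σC < -σD, so ψ = σC, ξ = -σD
    have hψ' : ψ = σC := by rw [hψ, min_eq_left hc.le]
    have hξ' : ξ = -σD := by rw [hξ, max_eq_right hc.le]
    have hρ' : ρ = (-σC) / σD := by rw [hρ, hψ', hξ', div_neg, neg_div]
    have hsum : σC + σD < 0 := by linarith
    have hbgt : σC < (σC + σD) * xstar - σD := by nlinarith
    have hblt : (σC + σD) * xstar - σD < -σD := by nlinarith
    have hage : σC ≤ (σC + σD) * xbar - σD := by nlinarith
    have hale : (σC + σD) * xbar - σD ≤ -σD := by nlinarith
    constructor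
    · rw [hρ', one_div_div, div_lt_div_iff₀ (by linarith) hk]
      nlinarith
    · rw [hρ', div_lt_div_iff₀ hk hσD]
      nlinarith
  · -- -σD < σC, so ψ = -σD, ξ = σC
    have hψ' : ψ = -σD := by rw [hψ, min_eq_right hc.le]
    have hξ' : ξ = σC := by rw [hξ, max_eq_left hc.le]
    have hρ' : ρ = σD / (-σC) := by rw [hρ, hψ', hξ', neg_div, ← div_neg]
    have hsum : 0 < σC + σD := by linarith
    have hbgt : -σD < (σC + σD) * xstar - σD := by nlinarith
    have hblt : (σC + σD) * xstar - σD < σC := by nlinarith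
    have hage : -σD ≤ (σC + σD) * xbar - σD := by nlinarith
    have hale : (σC + σD) * xbar - σD ≤ σC := by nlinarith
    constructor
    · rw [hρ', one_div_div, div_lt_div_iff₀ hσD hk]
      nlinarith
    · rw [hρ', div_lt_div_iff₀ hk (by linarith)]
      nlinarith
end

section
/- Full repulsiveness of defection: if β v > k v for every player v, then every diagonal entry μ_v = −σ_D·(k v − β v) of the (diagonal) Fréchet derivative of the SR-EGN vector field F at the all-zeros profile is strictly positive, so the full-defection state is repulsive in every direction. -/
/-!
At a profile with `x v = 0` the logistic factor `x v * (1 - x v)` vanishes, so the product rule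
leaves only its derivative `proj v` times the value of the remaining factor. At full defection
that value is `G v 0 - β v * f 0 = -σD * (k v - β v)`, which is positive as soon as `β v > k v`.
-/

theorem hasFDerivAt_mul_one_sub_mul_of_apply_eq_zero {ι : Type*} [Fintype ι]
    {g : (ι → ℝ) → ℝ} {x : ι → ℝ} {v : ι} (hg : DifferentiableAt ℝ g x) (hx : x v = 0) :
    HasFDerivAt (fun y => y v * (1 - y v) * g y)
      (g x • (ContinuousLinearMap.proj v : (ι → ℝ) →L[ℝ] ℝ)) x := by
  have hproj := (ContinuousLinearMap.proj v : (ι → ℝ) →L[ℝ] ℝ).hasFDerivAt (x := x)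
  refine ((hproj.mul (hproj.const_sub 1)).mul hg.hasFDerivAt).congr_fderiv ?_
  ext y
  simp [hx]

theorem full_defection_repulsive_general
    (N : ℕ)
    (A : Fin N → Fin N → ℝ)
    (σC σD : ℝ) (hσD : 0 < σD)
    (β : Fin N → ℝ)
    (k : Fin N → ℝ) (hk : ∀ v, k v = ∑ w, A v w)
    (G : Fin N → (Fin N → ℝ) → ℝ)
    (hG : ∀ v x, G v x = ∑ w, A v w * ((σC + σD) * x w - σD))
    (f : ℝ → ℝ) (hf : ∀ y, f y = (σC + σD) * y - σD)
    (F : (Fin N → ℝ) → (Fin N → ℝ))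
    (hF : ∀ x v, F x v = x v * (1 - x v) * (G v x - β v * f (x v)))
    (hβ : ∀ v, β v > k v) :
    HasFDerivAt F
      (ContinuousLinearMap.pi (fun v =>
        (-σD * (k v - β v)) • (ContinuousLinearMap.proj v : (Fin N → ℝ) →L[ℝ] ℝ)))
      (fun _ => 0)
    ∧ ∀ v, 0 < -σD * (k v - β v) := by
  refine ⟨hasFDerivAt_pi.2 fun v => ?_, fun v => mul_pos_of_neg_of_neg (neg_neg_of_pos hσD)
    (sub_neg.2 (hβ v))⟩
  have hdiff : DifferentiableAt ℝ (fun x => G v x - β v * f (x v)) (fun _ => 0) := by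
    simp only [hG, hf]
    fun_prop
  have hpayoff : G v (fun _ => 0) - β v * f 0 = -σD * (k v - β v) := by
    simp only [hG, hf, hk, mul_zero, zero_sub, mul_neg, Finset.sum_neg_distrib, ← Finset.sum_mul]
    ring
  simpa only [hF, hpayoff] using hasFDerivAt_mul_one_sub_mul_of_apply_eq_zero hdiff rfl

/-- Full repulsiveness of defection: if `β v > k v` for every player `v`, then the
Fréchet derivative of the SR-EGN vector field `F` at the all-zeros profile is the
diagonal linear map with entries `μ_v = -σD * (k v - β v)`, and every diagonal entry
is strictly positive, so full defection is repulsive in every direction. -/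
theorem full_defection_repulsive
    (N : ℕ) (hN : 1 ≤ N)
    (A : Fin N → Fin N → ℝ)
    (hA01 : ∀ v w, A v w = 0 ∨ A v w = 1)
    (hAdiag : ∀ v, A v v = 0)
    (σC σD : ℝ) (hσC : σC < 0) (hσD : 0 < σD)
    (β : Fin N → ℝ)
    (k : Fin N → ℝ) (hk : ∀ v, k v = ∑ w, A v w)
    (G : Fin N → (Fin N → ℝ) → ℝ)
    (hG : ∀ v x, G v x = ∑ w, A v w * ((σC + σD) * x w - σD))
    (f : ℝ → ℝ) (hf : ∀ y, f y = (σC + σD) * y - σD)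
    (F : (Fin N → ℝ) → (Fin N → ℝ))
    (hF : ∀ x v, F x v = x v * (1 - x v) * (G v x - β v * f (x v)))
    (hβ : ∀ v, β v > k v) :
    HasFDerivAt F
      (ContinuousLinearMap.pi (fun v =>
        (-σD * (k v - β v)) • (ContinuousLinearMap.proj v : (Fin N → ℝ) →L[ℝ] ℝ)))
      (fun _ => 0)
    ∧ ∀ v, 0 < -σD * (k v - β v) :=
  full_defection_repulsive_general N A σC σD hσD β k hk G hG f hf F hF hβ
end
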